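/- arXiv:1501.05098 — 7 statements merged into one kernel-verified Lean document; each statement's English description precedes it below -/
import Mathlib

section
/- Let p(x) = aₙxⁿ + ⋯ + a₁x + a₀ be a polynomial with integer coefficients with a₀ > 0, let α be a real root of p, and let l, u be rational numbers with 0 < l < α < u. Assume that the open interval (a₀/u, a₀/l) contains exactly one integer z. Then α is rational if and only if α = a₀/z. -/
theorem rational_algebraic_numbers (p : Polynomial ℤ) (α : ℝ) (l u : ℚ) (z : ℤ)
    (hroot : Polynomial.aeval α p = 0)
    (ha0 : 0 < p.coeff 0)
    (hl : 0 < l) (hlα : (l : ℝ) < α) (hαu : α < (u : ℝ))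
    (hz : ∀ m : ℤ, ((p.coeff 0 : ℝ) / (u : ℝ) < (m : ℝ) ∧
      (m : ℝ) < (p.coeff 0 : ℝ) / (l : ℝ)) ↔ m = z) :
    (∃ q : ℚ, α = (q : ℝ)) ↔ α = (p.coeff 0 : ℝ) / (z : ℝ) := by
  constructor
  · rintro ⟨q, rfl⟩
    have hlq : l < q := by exact_mod_cast hlα
    have hqu : q < u := by exact_mod_cast hαu
    have hq0 : 0 < q := hl.trans hlq
    -- transfer the root to ℚ
    have hq : Polynomial.aeval q p = 0 := by
      have h := Polynomial.aeval_algHom_apply (IsScalarTower.toAlgHom ℤ ℚ ℝ) q p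
      simp only [IsScalarTower.coe_toAlgHom', Rat.coe_castHom] at h
      have : ((Polynomial.aeval q p : ℚ) : ℝ) = 0 := by
        rw [← hroot]
        exact_mod_cast h.symm
      exact_mod_cast this
    -- rational root theorem
    have hdvd : IsFractionRing.num ℤ q ∣ p.coeff 0 :=
      num_dvd_of_is_root hq
    set N := IsFractionRing.num ℤ q with hN
    set D := (IsFractionRing.den ℤ q : ℤ) with hD
    have hND : (N : ℚ) / (D : ℚ) = q := IsFractionRing.mk'_num_den' ℤ q
    have hDne : D ≠ 0 := nonZeroDivisors.coe_ne_zero _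
    have hNne : N ≠ 0 := by
      intro h
      have := IsFractionRing.eq_zero_of_num_eq_zero (A := ℤ) (x := q) h
      exact hq0.ne' this
    obtain ⟨k, hk⟩ := hdvd
    have hm : ((k * D : ℤ) : ℚ) = (p.coeff 0 : ℚ) / q := by
      rw [← hND, hk]
      push_cast
      field_simp
    have hmR : ((k * D : ℤ) : ℝ) = (p.coeff 0 : ℝ) / (q : ℝ) := by
      have := congrArg (fun x : ℚ => (x : ℝ)) hm
      push_cast at this ⊢
      exact this
    have ha0R : (0 : ℝ) < (p.coeff 0 : ℝ) := by exact_mod_cast ha0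
    have hqR : (0 : ℝ) < (q : ℝ) := by exact_mod_cast hq0
    have hlR : (0 : ℝ) < (l : ℝ) := by exact_mod_cast hl
    have h1 : (p.coeff 0 : ℝ) / (u : ℝ) < ((k * D : ℤ) : ℝ) := by
      rw [hmR]
      exact div_lt_div_of_pos_left ha0R hqR (by exact_mod_cast hqu)
    have h2 : ((k * D : ℤ) : ℝ) < (p.coeff 0 : ℝ) / (l : ℝ) := by
      rw [hmR]
      exact div_lt_div_of_pos_left ha0R hlR (by exact_mod_cast hlq)
    have hzeq : k * D = z := (hz (k * D)).mp ⟨h1, h2⟩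
    have hkDne : ((k * D : ℤ) : ℝ) ≠ 0 := by
      rw [hmR]
      positivity
    rw [← hzeq, eq_div_iff hkDne, hmR]
    field_simp
  · intro h
    refine ⟨(p.coeff 0 : ℚ) / (z : ℚ), ?_⟩
    rw [h]
    push_cast
    ring
end

section
/- For all real numbers a, b, c with c ≥ 0: a + b·√c = 0 if and only if a² − b²·c = 0 and a·b ≤ 0. -/
theorem root_expression_eq_zero_iff (a b c : ℝ) (hc : 0 ≤ c) :
    a + b * Real.sqrt c = 0 ↔ a ^ 2 - b ^ 2 * c = 0 ∧ a * b ≤ 0 := by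
  have hs : 0 ≤ Real.sqrt c := Real.sqrt_nonneg c
  have hsq : Real.sqrt c * Real.sqrt c = c := Real.mul_self_sqrt hc
  constructor
  · intro h
    have ha : a = -(b * Real.sqrt c) := by linarith
    constructor
    · rw [ha]; ring_nf; nlinarith [hsq]
    · rw [ha]; nlinarith [sq_nonneg b, hs]
  · rintro ⟨h1, h2⟩
    have key : (a + b * Real.sqrt c) * (a - b * Real.sqrt c) = 0 := by
      nlinarith [hsq]
    rcases mul_eq_zero.mp key with h | h
    · exact h
    · have ha : a = b * Real.sqrt c := by linarith
      have : b * b * Real.sqrt c ≤ 0 := by rw [ha] at h2; nlinarith [h2]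
      have hb : b * Real.sqrt c = 0 := by nlinarith [sq_nonneg b, hs, mul_nonneg (mul_self_nonneg b) hs]
      rw [ha, hb]; ring
end

section
/- For all real numbers a, b, c: there exists a real number x₀ such that a·x² + b·x + c < 0 for all x > x₀, if and only if a < 0, or (a = 0 and b < 0), or (a = 0 and b = 0 and c < 0). -/
theorem virtual_substitution_infinity_quadratic (a b c : ℝ) :
    (∃ x₀ : ℝ, ∀ x : ℝ, x₀ < x → a * x ^ 2 + b * x + c < 0) ↔
      a < 0 ∨ (a = 0 ∧ b < 0) ∨ (a = 0 ∧ b = 0 ∧ c < 0) := by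
  constructor
  · rintro ⟨x₀, h⟩
    by_contra hc
    push_neg at hc
    obtain ⟨h1, h2, h3⟩ := hc
    rcases lt_or_eq_of_le h1 with ha | ha
    · -- a > 0
      set x := max x₀ (max 1 ((|b| + |c|) / a)) + 1 with hx
      have m1 := le_max_left x₀ (max 1 ((|b| + |c|) / a))
      have m2 := le_trans (le_max_left 1 ((|b| + |c|) / a)) (le_max_right x₀ _)
      have m3 := le_trans (le_max_right 1 ((|b| + |c|) / a)) (le_max_right x₀ _)
      have hx₀ : x₀ < x := by rw [hx]; linarith
      have hx1 : 1 < x := by rw [hx]; linarith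
      have hxb : (|b| + |c|) / a < x := by rw [hx]; linarith
      have hax : |b| + |c| < a * x := by
        rw [div_lt_iff₀ ha] at hxb; linarith
      have := h x hx₀
      have hb := abs_nonneg b
      have hcc := abs_nonneg c
      nlinarith [le_abs_self b, neg_abs_le b, le_abs_self c, neg_abs_le c]
    · -- a = 0
      subst ha
      have hb := h2 rfl
      rcases lt_or_eq_of_le hb with hb' | hb'
      · -- b > 0
        set x := max x₀ (|c| / b) + 1 with hx
        have m1 := le_max_left x₀ (|c| / b)
        have m2 := le_max_right x₀ (|c| / b)
        have hx₀ : x₀ < x := by rw [hx]; linarith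
        have hxb : |c| / b < x := by rw [hx]; linarith
        rw [div_lt_iff₀ hb'] at hxb
        have := h x hx₀
        nlinarith [le_abs_self c, neg_abs_le c]
      · have hcge := h3 rfl hb'.symm
        have := h (x₀ + 1) (by linarith)
        rw [← hb'] at this
        nlinarith
  · rintro (ha | ⟨ha, hb⟩ | ⟨ha, hb, hc⟩)
    · refine ⟨max 1 ((|b| + |c|) / (-a)), fun x hx => ?_⟩
      have hx1 : 1 < x := lt_of_le_of_lt (le_max_left _ _) hx
      have hxb : (|b| + |c|) / (-a) < x := lt_of_le_of_lt (le_max_right _ _) hx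
      have hna : 0 < -a := by linarith
      rw [div_lt_iff₀ hna] at hxb
      nlinarith [le_abs_self b, neg_abs_le b, le_abs_self c, neg_abs_le c]
    · refine ⟨|c| / (-b), fun x hx => ?_⟩
      have hnb : 0 < -b := by linarith
      rw [div_lt_iff₀ hnb] at hx
      subst ha
      nlinarith [le_abs_self c, neg_abs_le c]
    · exact ⟨0, fun x _ => by subst ha; subst hb; simpa using hc⟩
end

section
/- For every real number t the following are equivalent: (1) there exists δ > 0 such that for all s with t − δ < s < t one has s³ + s² − s − 1 < 0; (2) t³ + t² − t − 1 < 0, or (t³ + t² − t − 1 = 0 and (3t² + 2t − 1 > 0, or (3t² + 2t − 1 = 0 and (6t + 2 < 0, or (6t + 2 = 0 and 6 > 0))))). -/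
private lemma pneg {s : ℝ} (h1 : s < 1) (h2 : s ≠ -1) :
    s ^ 3 + s ^ 2 - s - 1 < 0 := by
  have hsq : (s + 1) ^ 2 > 0 := by
    have : s + 1 ≠ 0 := fun h => h2 (by linarith)
    positivity
  nlinarith [mul_pos (sub_pos.mpr h1) hsq]

theorem virtual_substitution_eps_cubic (t : ℝ) :
    (∃ δ : ℝ, 0 < δ ∧ ∀ s : ℝ, t - δ < s → s < t → s ^ 3 + s ^ 2 - s - 1 < 0) ↔
      (t ^ 3 + t ^ 2 - t - 1 < 0 ∨
        (t ^ 3 + t ^ 2 - t - 1 = 0 ∧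
          (3 * t ^ 2 + 2 * t - 1 > 0 ∨
            (3 * t ^ 2 + 2 * t - 1 = 0 ∧
              (6 * t + 2 < 0 ∨ (6 * t + 2 = 0 ∧ (6 : ℝ) > 0)))))) := by
  have key : ∀ u : ℝ, u ≤ 1 → (u ^ 3 + u ^ 2 - u - 1 < 0 ∨
        (u ^ 3 + u ^ 2 - u - 1 = 0 ∧
          (3 * u ^ 2 + 2 * u - 1 > 0 ∨
            (3 * u ^ 2 + 2 * u - 1 = 0 ∧
              (6 * u + 2 < 0 ∨ (6 * u + 2 = 0 ∧ (6 : ℝ) > 0)))))) := by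
    intro u hu
    rcases eq_or_lt_of_le hu with h1 | h1
    · right
      subst h1
      norm_num
    · by_cases hm : u = -1
      · subst hm
        right
        norm_num
      · left; exact pneg h1 hm
  constructor
  · rintro ⟨δ, hδ, h⟩
    apply key
    by_contra hlt
    push_neg at hlt
    set s := max (t - δ / 2) ((1 + t) / 2) with hs
    have hs1 : 1 < s := lt_max_of_lt_right (by linarith)
    have hst : s < t := max_lt (by linarith) (by linarith)
    have hsd : t - δ < s := lt_max_of_lt_left (by linarith)
    have := h s hsd hst
    nlinarith [sq_nonneg (s + 1), sq_nonneg (s - 1)]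
  · intro hR
    have ht1 : t ≤ 1 := by
      rcases hR with h | ⟨h, -⟩ <;> nlinarith [sq_nonneg (t + 1)]
    by_cases hm : -1 < t
    · refine ⟨t + 1, by linarith, fun s hs1 hs2 => ?_⟩
      exact pneg (by linarith) (by intro h; rw [h] at hs1; linarith)
    · push_neg at hm
      refine ⟨1, one_pos, fun s hs1 hs2 => ?_⟩
      exact pneg (by linarith) (by intro h; rw [h] at hs2; linarith)
end

section
/- Let f be a nonzero real polynomial and t a real number. There exists δ > 0 such that f(s) < 0 for all s with t − δ < s < t, if and only if there exists a natural number k ≤ deg f such that the j-th derivative of f vanishes at t for all j < k and (−1)^k · f^(k)(t) < 0, where f^(k) denotes the k-th derivative of f. -/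
open Polynomial Filter


theorem virtual_substitution_eps_general (f : Polynomial ℝ) (hf : f ≠ 0) (t : ℝ) :
    (∃ δ : ℝ, 0 < δ ∧ ∀ s : ℝ, t - δ < s → s < t → f.eval s < 0) ↔
      ∃ k : ℕ, k ≤ f.natDegree ∧
        (∀ j : ℕ, j < k → (Polynomial.derivative^[j] f).eval t = 0) ∧
        (-1 : ℝ) ^ k * (Polynomial.derivative^[k] f).eval t < 0 := by
  set m := f.rootMultiplicity t with hm
  set g := f /ₘ (X - C t) ^ m with hg
  have hfactor : (X - C t) ^ m * g = f := f.pow_mul_divByMonic_rootMultiplicity_eq t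
  have hgt : g.eval t ≠ 0 := eval_divByMonic_pow_rootMultiplicity_ne_zero t hf
  have hmle : m ≤ f.natDegree := by
    have h1 : (X - C t) ^ m ∣ f := f.pow_rootMultiplicity_dvd t
    have := Polynomial.natDegree_le_of_dvd h1 hf
    simpa [Polynomial.natDegree_pow, Polynomial.natDegree_X_sub_C] using this
  have hzero : ∀ j : ℕ, j < m → (Polynomial.derivative^[j] f).eval t = 0 := fun j hj =>
    isRoot_iterate_derivative_of_lt_rootMultiplicity hj
  have hderivm : (Polynomial.derivative^[m] f).eval t = (m.factorial : ℝ) * g.eval t := by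
    rw [eval_iterate_derivative_rootMultiplicity]; simp [hg, hm]
  have hfs : ∀ s : ℝ, f.eval s = (s - t) ^ m * g.eval s := by
    intro s; rw [← hfactor]; simp
  -- continuity of g.eval
  have hcont : ContinuousAt (fun s : ℝ => g.eval s) t := (Polynomial.continuous g).continuousAt
  constructor
  · rintro ⟨δ, hδ, hδf⟩
    refine ⟨m, hmle, hzero, ?_⟩
    rw [hderivm]
    have hfac : (0 : ℝ) < m.factorial := by exact_mod_cast m.factorial_pos
    rcases lt_or_gt_of_ne hgt with h | h
    · -- g t < 0
      by_cases hpar : (-1 : ℝ) ^ m * g.eval t < 0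
      · nlinarith [hpar]
      · -- (-1)^m * g t ≥ 0 with g t < 0 means (-1)^m = -1 case... derive contradiction via sign
        push_neg at hpar
        -- then (-1)^m * g t = ... must show contradiction: f < 0 near left but sign positive
        exfalso
        have hpos : 0 < (-1 : ℝ) ^ m * g.eval t := lt_of_le_of_ne hpar (by
          intro hcontra
          have : ((-1 : ℝ) ^ m) ≠ 0 := by positivity
          exact hgt (by
            rcases mul_eq_zero.mp hcontra.symm with h1 | h1
            · exact absurd h1 this
            · exact h1))
        have hev : ∀ᶠ s in nhds t, 0 < (-1 : ℝ) ^ m * g.eval s := by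
          have : ContinuousAt (fun s : ℝ => (-1 : ℝ) ^ m * g.eval s) t :=
            continuousAt_const.mul hcont
          exact this.eventually (eventually_gt_nhds hpos)
        rcases Metric.eventually_nhds_iff.mp hev with ⟨η, hη, hηs⟩
        set s := t - min δ η / 2 with hs
        have hmin : 0 < min δ η := lt_min hδ hη
        have hs1 : t - δ < s := by
          have : min δ η / 2 < δ := by
            have := min_le_left δ η; linarith
          rw [hs]; linarith
        have hs2 : s < t := by rw [hs]; linarith
        have hdist : dist s t < η := by
          rw [Real.dist_eq]
          have : |s - t| = min δ η / 2 := by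
            rw [hs]; rw [abs_of_nonpos (by linarith)]; ring
          rw [this]
          have := min_le_right δ η; linarith
        have hgs := hηs hdist
        have hflt := hδf s hs1 hs2
        rw [hfs s] at hflt
        have hts : 0 < t - s := by linarith
        have hpow : (s - t) ^ m = (-1 : ℝ) ^ m * (t - s) ^ m := by
          rw [← neg_pow]; ring_nf
        rw [hpow] at hflt
        have : 0 < (t - s) ^ m := pow_pos hts m
        nlinarith [hgs, this, hflt]
    · -- g t > 0: analogous, must have (-1)^m * g t < 0 i.e. m odd; otherwise contradiction
      by_cases hpar : (-1 : ℝ) ^ m * g.eval t < 0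
      · nlinarith [hpar]
      · push_neg at hpar
        exfalso
        have hpos : 0 < (-1 : ℝ) ^ m * g.eval t := lt_of_le_of_ne hpar (by
          intro hcontra
          have h1 : ((-1 : ℝ) ^ m) ≠ 0 := by positivity
          exact hgt (by
            rcases mul_eq_zero.mp hcontra.symm with h2 | h2
            · exact absurd h2 h1
            · exact h2))
        have hev : ∀ᶠ s in nhds t, 0 < (-1 : ℝ) ^ m * g.eval s := by
          have : ContinuousAt (fun s : ℝ => (-1 : ℝ) ^ m * g.eval s) t :=
            continuousAt_const.mul hcont
          exact this.eventually (eventually_gt_nhds hpos)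
        rcases Metric.eventually_nhds_iff.mp hev with ⟨η, hη, hηs⟩
        set s := t - min δ η / 2 with hs
        have hmin : 0 < min δ η := lt_min hδ hη
        have hs1 : t - δ < s := by
          have : min δ η / 2 < δ := by have := min_le_left δ η; linarith
          rw [hs]; linarith
        have hs2 : s < t := by rw [hs]; linarith
        have hdist : dist s t < η := by
          rw [Real.dist_eq]
          have : |s - t| = min δ η / 2 := by
            rw [hs]; rw [abs_of_nonpos (by linarith)]; ring
          rw [this]
          have := min_le_right δ η; linarith
        have hgs := hηs hdist
        have hflt := hδf s hs1 hs2
        rw [hfs s] at hflt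
        have hts : 0 < t - s := by linarith
        have hpow : (s - t) ^ m = (-1 : ℝ) ^ m * (t - s) ^ m := by
          rw [← neg_pow]; ring_nf
        rw [hpow] at hflt
        have : 0 < (t - s) ^ m := pow_pos hts m
        nlinarith [hgs, this, hflt]
  · rintro ⟨k, hk, hjzero, hklt⟩
    -- first show k = m
    have hkne : (Polynomial.derivative^[k] f).eval t ≠ 0 := by
      intro h; rw [h, mul_zero] at hklt; exact lt_irrefl 0 hklt
    have hkm : k = m := by
      rcases lt_trichotomy k m with h | h | h
      · exact absurd (hzero k h) hkne
      · exact h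
      · have := hjzero m h
        rw [hderivm] at this
        have hfac : (0 : ℝ) < m.factorial := by exact_mod_cast m.factorial_pos
        exact absurd (by
          rcases mul_eq_zero.mp this with h1 | h1
          · exact absurd h1 (ne_of_gt hfac)
          · exact h1) hgt
    subst hkm
    rw [hderivm] at hklt
    have hfac : (0 : ℝ) < m.factorial := by exact_mod_cast m.factorial_pos
    have hneg : (-1 : ℝ) ^ m * g.eval t < 0 := by nlinarith
    have hev : ∀ᶠ s in nhds t, (-1 : ℝ) ^ m * g.eval s < 0 := by
      have : ContinuousAt (fun s : ℝ => (-1 : ℝ) ^ m * g.eval s) t :=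
        continuousAt_const.mul hcont
      exact this.eventually (eventually_lt_nhds hneg)
    rcases Metric.eventually_nhds_iff.mp hev with ⟨η, hη, hηs⟩
    refine ⟨η, hη, fun s hs1 hs2 => ?_⟩
    have hdist : dist s t < η := by
      rw [Real.dist_eq, abs_of_nonpos (by linarith)]; linarith
    have hgs := hηs hdist
    rw [hfs s]
    have hpow : (s - t) ^ m = (-1 : ℝ) ^ m * (t - s) ^ m := by
      rw [← neg_pow]; ring_nf
    rw [hpow]
    have hts : 0 < (t - s) ^ m := pow_pos (by linarith) m
    nlinarith [hgs, hts]
end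

section
/- For every real number a with a ≤ 0 and 3a² − 3a − 4 ≤ 0, the values x = (√(−3a² + 3a + 4) − 2)/3 and y = a satisfy a·y + 3x² + 4x ≤ a, y ≤ a, and a ≤ x, where √ denotes the nonnegative real square root (which is defined since the condition implies −3a² + 3a + 4 ≥ 0). -/
theorem eqr_second_row (a : ℝ) (h1 : a ≤ 0) (h2 : 3 * a ^ 2 - 3 * a - 4 ≤ 0) :
    a * a + 3 * ((Real.sqrt (-3 * a ^ 2 + 3 * a + 4) - 2) / 3) ^ 2 +
        4 * ((Real.sqrt (-3 * a ^ 2 + 3 * a + 4) - 2) / 3) ≤ a ∧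
      a ≤ a ∧ a ≤ (Real.sqrt (-3 * a ^ 2 + 3 * a + 4) - 2) / 3 := by
  have hnn : (0:ℝ) ≤ -3 * a ^ 2 + 3 * a + 4 := by nlinarith
  set s := Real.sqrt (-3 * a ^ 2 + 3 * a + 4) with hs
  have hsq : s ^ 2 = -3 * a ^ 2 + 3 * a + 4 := Real.sq_sqrt hnn
  have hs0 : 0 ≤ s := Real.sqrt_nonneg _
  refine ⟨by nlinarith, le_refl a, ?_⟩
  rcases le_or_gt (3 * a + 2) 0 with h | h
  · nlinarith
  · nlinarith [sq_nonneg (s - (3 * a + 2))]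
end

section
/- For every real number a with a + 4 < 0 there exists ε₀ > 0 such that for every ε₁ with 0 < ε₁ < ε₀ there exists δ₀ > 0 such that for every ε₂ with 0 < ε₂ < δ₀, the values x = (−a − 3ε₁ − 4)/3 and y = (−a − 3ε₁ − 3ε₂ − 4)/3 satisfy a·y + 3x² + 4x < 0, y < x, and a < y. -/
theorem nonstandard_eqr_first_row (a : ℝ) (ha : a + 4 < 0) :
    ∃ ε₀ : ℝ, 0 < ε₀ ∧ ∀ ε₁ : ℝ, 0 < ε₁ → ε₁ < ε₀ →
      ∃ δ₀ : ℝ, 0 < δ₀ ∧ ∀ ε₂ : ℝ, 0 < ε₂ → ε₂ < δ₀ →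
        a * ((-a - 3 * ε₁ - 3 * ε₂ - 4) / 3) +
            3 * ((-a - 3 * ε₁ - 4) / 3) ^ 2 + 4 * ((-a - 3 * ε₁ - 4) / 3) < 0 ∧
          (-a - 3 * ε₁ - 3 * ε₂ - 4) / 3 < (-a - 3 * ε₁ - 4) / 3 ∧
          a < (-a - 3 * ε₁ - 3 * ε₂ - 4) / 3 := by
  refine ⟨(-a - 4) / 3, by linarith, fun ε₁ h1 h1' => ?_⟩
  have hx : 0 < -a - 3 * ε₁ - 4 := by linarith
  have hna : 0 < -a := by linarith
  refine ⟨ε₁ * (-a - 3 * ε₁ - 4) / (-a), by positivity, fun ε₂ h2 h2' => ?_⟩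
  have key : (-a) * ε₂ < ε₁ * (-a - 3 * ε₁ - 4) := by
    have := (lt_div_iff₀ hna).mp h2'
    nlinarith
  have hε₂x : 3 * ε₂ < -a - 3 * ε₁ - 4 := by nlinarith
  refine ⟨?_, by linarith, by nlinarith⟩
  nlinarith [key]
end
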